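/- arXiv:2410.02614 — 4 statements merged into one kernel-verified Lean document; each statement's English description precedes it below -/
import Mathlib

section
/- Let f : ℕ → [1, ∞) be a non-decreasing function of subexponential growth, i.e. f(n)^(1/n) → 1 as n → ∞. Then there exists a non-decreasing function F : ℕ → [1, ∞) with F(n) ≥ f(n) for all n and F(n+1)/F(n) → 1 as n → ∞. -/
open Filter

theorem subexp_dominating_ratio_to_one
    (f : ℕ → ℝ) (hf1 : ∀ n, 1 ≤ f n) (hmono : Monotone f)
    (hsub : Tendsto (fun n : ℕ => (f n) ^ (1 / (n : ℝ))) atTop (nhds 1)) :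
    ∃ F : ℕ → ℝ, Monotone F ∧ (∀ n, 1 ≤ F n) ∧ (∀ n, f n ≤ F n) ∧
      Tendsto (fun n : ℕ => F (n + 1) / F n) atTop (nhds 1) := by
  have hfpos : ∀ m, (0:ℝ) < f m := fun m => lt_of_lt_of_le one_pos (hf1 m)
  set g : ℕ → ℝ := fun m => f m ^ (1 / (m:ℝ)) with hg
  have hg0 : ∀ m, 0 ≤ g m := fun m => Real.rpow_nonneg (hfpos m).le _
  obtain ⟨C', hC'⟩ := hsub.bddAbove_range
  set C : ℝ := max C' 1 with hCdef
  have hC : ∀ m, g m ≤ C := fun m =>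
    le_trans (hC' (Set.mem_range_self m)) (le_max_left _ _)
  set A : ℕ → Set ℝ := fun k => (fun m => f m ^ ((k:ℝ)/(m:ℝ))) '' Set.Ici k with hA
  have hAne : ∀ k, (A k).Nonempty := fun k => ⟨_, ⟨k, le_refl k, rfl⟩⟩
  have hkey : ∀ k m : ℕ, f m ^ ((k:ℝ)/(m:ℝ)) = g m ^ (k:ℝ) := by
    intro k m
    show f m ^ ((k:ℝ)/(m:ℝ)) = (f m ^ (1/(m:ℝ))) ^ ((k:ℕ):ℝ)
    rw [← Real.rpow_mul (hfpos m).le]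
    congr 1
    ring
  have hAbdd : ∀ k, BddAbove (A k) := by
    intro k
    refine ⟨C ^ (k:ℝ), ?_⟩
    rintro x ⟨m, hm, rfl⟩
    dsimp only
    rw [hkey]
    exact Real.rpow_le_rpow (hg0 m) (hC m) (Nat.cast_nonneg k)
  set S : ℕ → ℝ := fun k => sSup (A k) with hS
  have hmem_le : ∀ k m : ℕ, k ≤ m → f m ^ ((k:ℝ)/(m:ℝ)) ≤ S k := by
    intro k m hm
    exact le_csSup (hAbdd k) ⟨m, hm, rfl⟩
  have hself : ∀ k : ℕ, 1 ≤ k → f k ≤ S k := by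
    intro k hk
    have hk0 : ((k:ℝ)) ≠ 0 := Nat.cast_ne_zero.mpr (by omega)
    have := hmem_le k k le_rfl
    rwa [div_self hk0, Real.rpow_one] at this
  have hSmono : ∀ k : ℕ, 1 ≤ k → S k ≤ S (k+1) := by
    intro k hk
    refine csSup_le (hAne k) ?_
    rintro x ⟨m, hm, rfl⟩
    dsimp only
    have hm' : k ≤ m := hm
    rcases eq_or_lt_of_le hm' with rfl | h
    · have hm0 : ((k:ℝ)) ≠ 0 := Nat.cast_ne_zero.mpr (by omega)
      rw [div_self hm0, Real.rpow_one]
      exact le_trans (hmono (Nat.le_succ k)) (hself (k+1) (by omega))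
    · have hm1 : k + 1 ≤ m := h
      have hmpos : (0:ℝ) < (m:ℝ) := Nat.cast_pos.mpr (by omega)
      calc f m ^ ((k:ℝ)/(m:ℝ)) ≤ f m ^ ((((k+1):ℕ):ℝ)/(m:ℝ)) := by
            apply Real.rpow_le_rpow_of_exponent_le (hf1 m)
            push_cast
            gcongr
            linarith
        _ ≤ S (k+1) := hmem_le (k+1) m hm1
  -- F
  refine ⟨fun n => S (n+1), ?_, ?_, ?_, ?_⟩
  · exact monotone_nat_of_le_succ fun n => hSmono (n+1) (by omega)
  · exact fun n => le_trans (hf1 (n+1)) (hself (n+1) (by omega))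
  · exact fun n => le_trans (hmono (Nat.le_succ n)) (hself (n+1) (by omega))
  · have hF1 : ∀ n : ℕ, 1 ≤ S (n+1) := fun n => le_trans (hf1 (n+1)) (hself (n+1) (by omega))
    have hFpos : ∀ n : ℕ, 0 < S (n+1) := fun n => lt_of_lt_of_le one_pos (hF1 n)
    rw [Metric.tendsto_atTop]
    intro ε hε
    have hε2 : 0 < ε/2 := by linarith
    obtain ⟨N, hN⟩ := (Metric.tendsto_atTop.mp hsub) (ε/2) hε2
    have hNbd : ∀ m, N ≤ m → g m ≤ 1 + ε/2 := by
      intro m hm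
      have h := hN m hm
      rw [Real.dist_eq] at h
      have h' := abs_lt.mp h
      linarith [h'.2]
    refine ⟨N, fun n hn => ?_⟩
    have hstep : S (n+2) ≤ S (n+1) * (1 + ε/2) := by
      refine csSup_le (hAne (n+2)) ?_
      rintro x ⟨m, hm, rfl⟩
      dsimp only
      have hm' : n + 2 ≤ m := hm
      have hexp : (((n+2):ℕ):ℝ)/(m:ℝ) = (((n+1):ℕ):ℝ)/(m:ℝ) + 1/(m:ℝ) := by
        push_cast
        ring
      rw [hexp, Real.rpow_add (hfpos m)]
      have h1 : f m ^ ((((n+1):ℕ):ℝ)/(m:ℝ)) ≤ S (n+1) := hmem_le (n+1) m (by omega)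
      have h2 : f m ^ (1/(m:ℝ)) ≤ 1 + ε/2 := hNbd m (by omega)
      have h3 : 0 ≤ f m ^ (1/(m:ℝ)) := Real.rpow_nonneg (hfpos m).le _
      have h4 : 0 ≤ S (n+1) := (hFpos n).le
      exact mul_le_mul h1 h2 h3 h4
    have hratio_ge : 1 ≤ S (n+1+1) / S (n+1) := by
      rw [le_div_iff₀ (hFpos n), one_mul]
      exact hSmono (n+1) (by omega)
    have hratio_le : S (n+1+1) / S (n+1) ≤ 1 + ε/2 := by
      rw [div_le_iff₀ (hFpos n)]
      calc S (n+1+1) = S (n+2) := by norm_num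
        _ ≤ S (n+1) * (1 + ε/2) := hstep
        _ = (1 + ε/2) * S (n+1) := by ring
    rw [Real.dist_eq]
    rw [abs_of_nonneg (by linarith)]
    linarith
end

section
/- Let X be a countable set, G a group acting on X, and suppose X admits a moderate ℓ¹-function. Then X has subexponential growth of orbits: for every finite subset S ⊆ G and every x ∈ X, |Sⁿx|^{1/n} → 1 as n → ∞. -/
open Filter

/-- The set of points reachable from `x` by products of at most `n` elements of `S`. -/
def orbitSet {G X : Type*} [Group G] [MulAction G X] (S : Finset G) (x : X) (n : ℕ) : Set X :=
  {y | ∃ l : List G, l.length ≤ n ∧ (∀ g ∈ l, g ∈ S) ∧ l.prod • x = y}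

lemma orbitSet_finite {G X : Type*} [Group G] [MulAction G X] (S : Finset G) (x : X) :
    ∀ n, (orbitSet S x n).Finite := by
  intro n
  induction n with
  | zero =>
    apply Set.Finite.subset (Set.finite_singleton x)
    rintro y ⟨l, hl, -, rfl⟩
    simp only [Nat.le_zero, List.length_eq_zero_iff] at hl
    simp [hl]
  | succ n ih =>
    apply Set.Finite.subset (ih.union (Set.Finite.biUnion S.finite_toSet
      (fun g _ => ih.image (fun y => g • y))))
    rintro y ⟨l, hl, hmem, rfl⟩
    match l with
    | [] => exact Or.inl ⟨[], by simp⟩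
    | g :: l' =>
      refine Or.inr (Set.mem_biUnion (hmem g (by simp))
        ⟨l'.prod • x, ⟨l', ?_, fun h hh => hmem h (by simp [hh]), rfl⟩, ?_⟩)
      · simpa using Nat.lt_succ_iff.mp hl
      · simp [mul_smul]

lemma mem_orbitSet_self {G X : Type*} [Group G] [MulAction G X] (S : Finset G) (x : X) (n : ℕ) :
    x ∈ orbitSet S x n := ⟨[], by simp⟩

lemma aux_rpow_tendsto (K : ℝ) (hK : 0 < K) :
    Tendsto (fun n : ℕ => K ^ (1 / (n : ℝ))) atTop (nhds 1) := by
  have h1 : Tendsto (fun n : ℕ => Real.log K * (1 / (n : ℝ))) atTop (nhds 0) := by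
    simpa using (tendsto_one_div_atTop_nhds_zero_nat).const_mul (Real.log K)
  have h2 := (Real.continuous_exp.tendsto 0).comp h1
  simp only [Real.exp_zero] at h2
  refine h2.congr fun n => ?_
  simp [Real.rpow_def_of_pos hK]

lemma key_lower {G X : Type*} [Group G] [MulAction G X]
    (ν : X → ℝ) (hpos : ∀ x, 0 < ν x)
    (hmod : ∀ g : G, Tendsto (fun x : X => ν (g • x) / ν x) cofinite (nhds 1))
    (S : Finset G) (x : X) (ε : ℝ) (hε : 0 < ε) (hε1 : ε < 1) :
    ∃ c > 0, ∀ l : List G, (∀ g ∈ l, g ∈ S) →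
      c * (1 - ε) ^ l.length ≤ ν (l.prod • x) := by
  have hεpos : (0:ℝ) < 1 - ε := by linarith
  have hB : ∀ g : G, {y : X | ¬ ((1 - ε) * ν y ≤ ν (g • y))}.Finite := by
    intro g
    have h := (hmod g).eventually (eventually_ge_nhds (show (1:ℝ) - ε < 1 by linarith))
    rw [Filter.eventually_cofinite] at h
    refine h.subset fun y hy hy2 => hy ((le_div_iff₀ (hpos y)).mp hy2)
  set F : Set X := ⋃ g ∈ S, {y : X | ¬ ((1 - ε) * ν y ≤ ν (g • y))} with hFdef
  have hF : F.Finite := Set.Finite.biUnion S.finite_toSet (fun g _ => hB g)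
  set K : Set X := insert x (F ∪ ⋃ g ∈ S, (fun y => g • y) '' F) with hKdef
  have hK : K.Finite :=
    (hF.union (Set.Finite.biUnion S.finite_toSet (fun g _ => hF.image _))).insert x
  have hxK : x ∈ K := Set.mem_insert _ _
  obtain ⟨z, hz, hzmin⟩ := hK.toFinset.exists_min_image ν ⟨x, hK.mem_toFinset.mpr hxK⟩
  have hmin : ∀ y ∈ K, ν z ≤ ν y := fun y hy => hzmin y (hK.mem_toFinset.mpr hy)
  refine ⟨ν z, hpos z, ?_⟩
  intro l
  induction l with
  | nil => intro _; simpa using hmin x hxK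
  | cons g l' ih =>
    intro hmem
    have hg : g ∈ S := hmem g (by simp)
    have hih := ih (fun h hh => hmem h (by simp [hh]))
    have hstep : (g :: l').prod • x = g • (l'.prod • x) := by simp [mul_smul]
    rw [hstep]
    set y := l'.prod • x with hy
    by_cases hyF : y ∈ F
    · have hKmem : g • y ∈ K := Set.mem_insert_of_mem _
        (Or.inr (Set.mem_biUnion hg ⟨y, hyF, rfl⟩))
      have h1 : (1 - ε) ^ (g :: l').length ≤ 1 :=
        pow_le_one₀ (by linarith) (by linarith)
      calc ν z * (1 - ε) ^ (g :: l').length ≤ ν z * 1 :=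
            mul_le_mul_of_nonneg_left h1 (hpos z).le
        _ = ν z := mul_one _
        _ ≤ ν (g • y) := hmin _ hKmem
    · have hgood : (1 - ε) * ν y ≤ ν (g • y) := by
        by_contra hcon
        exact hyF (Set.mem_biUnion hg hcon)
      calc ν z * (1 - ε) ^ (g :: l').length
          = (1 - ε) * (ν z * (1 - ε) ^ l'.length) := by rw [List.length_cons, pow_succ]; ring
        _ ≤ (1 - ε) * ν y := mul_le_mul_of_nonneg_left hih hεpos.le
        _ ≤ ν (g • y) := hgood

theorem subexp_orbits_of_moderate_l1
    {G X : Type*} [Group G] [MulAction G X] [Countable X]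
    (ν : X → ℝ) (hsum : Summable ν) (hpos : ∀ x, 0 < ν x)
    (hmod : ∀ g : G, Tendsto (fun x : X => ν (g • x) / ν x) cofinite (nhds 1)) :
    ∀ (S : Finset G) (x : X),
      Tendsto (fun n : ℕ => (Nat.card (orbitSet S x n) : ℝ) ^ (1 / (n : ℝ)))
        atTop (nhds 1) := by
  intro S x
  have hfin := orbitSet_finite S x
  have hcard_pos : ∀ n, 1 ≤ Nat.card (orbitSet S x n) := by
    intro n
    haveI := (hfin n).to_subtype
    haveI : Nonempty (orbitSet S x n) := ⟨⟨x, mem_orbitSet_self S x n⟩⟩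
    exact Nat.one_le_iff_ne_zero.mpr Nat.card_pos.ne'
  have hge : ∀ n : ℕ, 1 ≤ (Nat.card (orbitSet S x n) : ℝ) ^ (1 / (n : ℝ)) := by
    intro n
    exact Real.one_le_rpow (by exact_mod_cast hcard_pos n) (by positivity)
  rw [Metric.tendsto_atTop]
  intro δ hδ
  set ε : ℝ := min (1/2) (δ/4) with hεdef
  have hε : 0 < ε := lt_min (by norm_num) (by linarith)
  have hε1 : ε < 1 := lt_of_le_of_lt (min_le_left _ _) (by norm_num)
  have hεhalf : ε ≤ 1/2 := min_le_left _ _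
  have hεδ : ε ≤ δ/4 := min_le_right _ _
  have hr : (0:ℝ) < 1 - ε := by linarith
  obtain ⟨c, hc, hkey⟩ := key_lower ν hpos hmod S x ε hε hε1
  set T := ∑' y, ν y with hTdef
  have hT : 0 < T := lt_of_lt_of_le (hpos x) (Summable.le_tsum hsum x (fun _ _ => (hpos _).le))
  have hbound : ∀ n : ℕ, (Nat.card (orbitSet S x n) : ℝ) * (c * (1 - ε) ^ n) ≤ T := by
    intro n
    set A := (hfin n).toFinset with hAdef
    have h1 : ∀ y ∈ A, c * (1 - ε) ^ n ≤ ν y := by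
      intro y hy
      obtain ⟨l, hl, hmem, rfl⟩ := (hfin n).mem_toFinset.mp hy
      calc c * (1 - ε) ^ n ≤ c * (1 - ε) ^ l.length :=
            mul_le_mul_of_nonneg_left
              (pow_le_pow_of_le_one hr.le (by linarith) hl) hc.le
        _ ≤ ν (l.prod • x) := hkey l hmem
    have h2 : A.card • (c * (1 - ε) ^ n) ≤ ∑ y ∈ A, ν y :=
      Finset.card_nsmul_le_sum A ν _ h1
    have h3 : ∑ y ∈ A, ν y ≤ T := Summable.sum_le_tsum A (fun y _ => (hpos y).le) hsum
    have hcardeq : Nat.card (orbitSet S x n) = A.card := by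
      rw [Nat.card_coe_set_eq, Set.ncard_eq_toFinset_card _ (hfin n)]
    rw [hcardeq, ← nsmul_eq_mul]
    exact h2.trans h3
  have hb : Tendsto (fun n : ℕ => (T / c) ^ (1 / (n : ℝ)) / (1 - ε)) atTop
      (nhds (1 / (1 - ε))) := by
    simpa using (aux_rpow_tendsto (T / c) (div_pos hT hc)).div_const (1 - ε)
  have hlt : 1 / (1 - ε) < 1 + δ := by
    have h4 : 1 / (1 - ε) ≤ 1 + 2 * ε := by
      rw [div_le_iff₀ hr]; nlinarith
    linarith
  obtain ⟨N, hN⟩ := eventually_atTop.mp (hb.eventually (eventually_lt_nhds hlt))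
  refine ⟨max N 1, fun n hn => ?_⟩
  have hn1 : 1 ≤ n := le_trans (le_max_right _ _) hn
  have hnN : N ≤ n := le_trans (le_max_left _ _) hn
  have hn0 : (n : ℝ) ≠ 0 := Nat.cast_ne_zero.mpr (by omega)
  have hrpow : ((1 - ε) ^ n : ℝ) ^ (1 / (n : ℝ)) = 1 - ε := by
    rw [← Real.rpow_natCast (1 - ε) n, ← Real.rpow_mul hr.le,
      mul_one_div_cancel hn0, Real.rpow_one]
  have hale : (Nat.card (orbitSet S x n) : ℝ) ^ (1 / (n : ℝ)) ≤
      (T / c) ^ (1 / (n : ℝ)) / (1 - ε) := by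
    have h5 : (Nat.card (orbitSet S x n) : ℝ) ≤ T / c / (1 - ε) ^ n := by
      rw [div_div, le_div_iff₀ (by positivity)]
      linarith [hbound n]
    calc (Nat.card (orbitSet S x n) : ℝ) ^ (1 / (n : ℝ))
        ≤ (T / c / (1 - ε) ^ n) ^ (1 / (n : ℝ)) :=
          Real.rpow_le_rpow (by positivity) h5 (by positivity)
      _ = (T / c) ^ (1 / (n : ℝ)) / ((1 - ε) ^ n : ℝ) ^ (1 / (n : ℝ)) :=
          Real.div_rpow (by positivity) (by positivity) _
      _ = (T / c) ^ (1 / (n : ℝ)) / (1 - ε) := by rw [hrpow]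
  have hlt2 : (Nat.card (orbitSet S x n) : ℝ) ^ (1 / (n : ℝ)) < 1 + δ :=
    lt_of_le_of_lt hale (hN n hnN)
  rw [Real.dist_eq, abs_of_nonneg (by linarith [hge n])]
  linarith [hge n]
end

section
/- Let (X, d) be a metric space with integer-valued distance and a basepoint x₀ such that all balls B(x₀; n) are finite and n ↦ |B(x₀; n)| has subexponential growth. Let G be a group acting on X by isometries-up-to-bounded-displacement, i.e. for every g ∈ G, c_g := sup_{x∈X} d(x, gx) < ∞. Suppose F : ℕ → [1,∞) is non-decreasing with F(n) ≥ n²|B(x₀;n)| and F(n+1)/F(n) → 1. Define ν(x) := 1/F(d(x₀, x)). Then ν is a moderate ℓ¹-function on X. -/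
open Filter Metric

private lemma shiftRatio (F : ℕ → ℝ) (hF1 : ∀ n, 1 ≤ F n)
    (hrat : Tendsto (fun n : ℕ => F (n + 1) / F n) atTop (nhds 1)) (k : ℕ) :
    Tendsto (fun n : ℕ => F (n + k) / F n) atTop (nhds 1) := by
  have hFpos : ∀ n, 0 < F n := fun n => lt_of_lt_of_le one_pos (hF1 n)
  induction k with
  | zero =>
    have : (fun n : ℕ => F (n + 0) / F n) = fun _ => (1 : ℝ) := by
      funext n; simp [div_self (hFpos n).ne']
    rw [this]; exact tendsto_const_nhds
  | succ k ih =>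
    have h1 : Tendsto (fun n : ℕ => F (n + k + 1) / F (n + k)) atTop (nhds 1) :=
      hrat.comp (tendsto_add_atTop_nat k)
    have h2 := h1.mul ih
    have heq : (fun n : ℕ => F (n + k + 1) / F (n + k) * (F (n + k) / F n))
        = fun n : ℕ => F (n + (k + 1)) / F n := by
      funext n
      have h1 := (hFpos n).ne'
      have h2 := (hFpos (n + k)).ne'
      field_simp
      ring
    rw [heq] at h2; simpa using h2

theorem moderate_l1_from_metric
    {G X : Type*} [Group G] [MetricSpace X] [MulAction G X]
    (hint : ∀ x y : X, ∃ k : ℕ, dist x y = (k : ℝ))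
    (x₀ : X)
    (hfin : ∀ n : ℕ, (closedBall x₀ (n : ℝ)).Finite)
    (hvol : Tendsto (fun n : ℕ => (Nat.card (closedBall x₀ (n : ℝ)) : ℝ) ^ (1 / (n : ℝ)))
      atTop (nhds 1))
    (hdisp : ∀ g : G, ∃ c : ℝ, ∀ x : X, dist x (g • x) ≤ c)
    (F : ℕ → ℝ) (hF1 : ∀ n, 1 ≤ F n) (hmono : Monotone F)
    (hFge : ∀ n : ℕ, (n : ℝ) ^ 2 * (Nat.card (closedBall x₀ (n : ℝ)) : ℝ) ≤ F n)
    (hrat : Tendsto (fun n : ℕ => F (n + 1) / F n) atTop (nhds 1))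
    (ν : X → ℝ) (hν : ∀ x : X, ν x = 1 / F ⌈dist x₀ x⌉₊) :
    Summable ν ∧ (∀ x, 0 < ν x) ∧
      ∀ g : G, Tendsto (fun x : X => ν (g • x) / ν x) cofinite (nhds 1) := by
  have hFpos : ∀ n, 0 < F n := fun n => lt_of_lt_of_le one_pos (hF1 n)
  set nf : X → ℕ := fun x => ⌈dist x₀ x⌉₊ with hnf
  have hdist : ∀ x : X, (nf x : ℝ) = dist x₀ x := by
    intro x
    obtain ⟨k, hk⟩ := hint x₀ x
    simp [hnf, hk]
  have hνpos : ∀ x, 0 < ν x := by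
    intro x; rw [hν]; exact one_div_pos.mpr (hFpos _)
  -- the volume function
  set vol : ℕ → ℝ := fun n => (Nat.card (closedBall x₀ (n : ℝ)) : ℝ) with hvoldef
  set g0 : ℕ → ℝ := fun n => vol n / F n with hg0
  have hg0nonneg : ∀ n, 0 ≤ g0 n := by
    intro n; apply div_nonneg (by positivity) (hFpos n).le
  have hg0le : ∀ n : ℕ, 1 ≤ n → g0 n ≤ 1 / (n : ℝ) ^ 2 := by
    intro n hn
    rw [div_le_div_iff₀ (hFpos n) (by positivity)]
    calc vol n * (n : ℝ) ^ 2 = (n : ℝ) ^ 2 * vol n := by ring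
    _ ≤ F n := hFge n
    _ = 1 * F n := by ring
  have hg0sum : Summable g0 := by
    rw [← summable_nat_add_iff 1]
    apply Summable.of_nonneg_of_le (fun n => hg0nonneg (n + 1))
      (f := fun n : ℕ => 1 / ((n : ℝ) + 1) ^ 2)
    · intro n
      have := hg0le (n + 1) (Nat.le_add_left 1 n)
      push_cast at this ⊢
      linarith
    · have h := (summable_nat_add_iff (f := fun n : ℕ => 1 / (n : ℝ) ^ 2) 1).mpr
        (Real.summable_one_div_nat_pow.mpr one_lt_two)
      exact h.congr (fun n => by push_cast; ring)
  -- cardinality of balls as finsets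
  have hcard : ∀ n : ℕ, ((hfin n).toFinset.card : ℝ) = vol n := by
    intro n
    rw [hvoldef]
    congr 1
    rw [Nat.card_coe_set_eq, Set.ncard_eq_toFinset_card _ (hfin n)]
  -- summability
  have hsummable : Summable ν := by
    apply summable_of_sum_le (c := ∑' n, g0 n) (fun x => (hνpos x).le)
    intro u
    have key : ∑ x ∈ u, ν x ≤ ∑ n ∈ u.image nf, g0 n := by
      rw [← Finset.sum_fiberwise_of_maps_to (g := nf) (t := u.image nf)
        (fun x hx => Finset.mem_image_of_mem nf hx) ν]
      apply Finset.sum_le_sum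
      intro n _
      have hsub : u.filter (fun x => nf x = n) ⊆ (hfin n).toFinset := by
        intro x hx
        rw [Finset.mem_filter] at hx
        rw [Set.Finite.mem_toFinset, mem_closedBall, dist_comm, ← hdist x, hx.2]
      calc ∑ x ∈ u.filter (fun x => nf x = n), ν x
          = ∑ x ∈ u.filter (fun x => nf x = n), 1 / F n := by
            apply Finset.sum_congr rfl
            intro x hx
            rw [Finset.mem_filter] at hx
            rw [hν, ← hx.2]
        _ = (u.filter (fun x => nf x = n)).card * (1 / F n) := by
            rw [Finset.sum_const, nsmul_eq_mul]
        _ ≤ ((hfin n).toFinset.card : ℝ) * (1 / F n) := by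
            apply mul_le_mul_of_nonneg_right _ (one_div_nonneg.mpr (hFpos n).le)
            exact_mod_cast Finset.card_le_card hsub
        _ = g0 n := by rw [hcard n, hg0, mul_one_div]
    exact key.trans (Summable.sum_le_tsum _ (fun n _ => hg0nonneg n) hg0sum)
  refine ⟨hsummable, hνpos, ?_⟩
  -- moderateness
  intro g
  obtain ⟨c, hc⟩ := hdisp g
  set k := ⌈c⌉₊ with hk
  have hle1 : ∀ x : X, nf (g • x) ≤ nf x + k := by
    intro x
    have hc0 : 0 ≤ c := le_trans dist_nonneg (hc x)
    have : dist x₀ (g • x) ≤ dist x₀ x + c :=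
      le_trans (dist_triangle x₀ x (g • x)) (by linarith [hc x])
    have h2 : (nf (g • x) : ℝ) ≤ (nf x : ℝ) + (k : ℝ) := by
      rw [hdist, hdist]
      exact this.trans (by linarith [Nat.le_ceil c])
    exact_mod_cast h2
  have hle2 : ∀ x : X, nf x ≤ nf (g • x) + k := by
    intro x
    have hc0 : 0 ≤ c := le_trans dist_nonneg (hc x)
    have : dist x₀ x ≤ dist x₀ (g • x) + c := by
      have := dist_triangle x₀ (g • x) x
      rw [dist_comm (g • x) x] at this
      linarith [hc x]
    have h2 : (nf x : ℝ) ≤ (nf (g • x) : ℝ) + (k : ℝ) := by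
      rw [hdist, hdist]
      exact this.trans (by linarith [Nat.le_ceil c])
    exact_mod_cast h2
  -- nf tends to atTop along cofinite
  have hnf_tendsto : Tendsto nf cofinite atTop := by
    rw [Filter.tendsto_atTop]
    intro N
    rw [eventually_cofinite]
    apply Set.Finite.subset (hfin N)
    intro x hx
    simp only [Set.mem_setOf_eq, not_le] at hx
    rw [mem_closedBall, dist_comm, ← hdist x]
    exact_mod_cast hx.le
  -- squeeze
  have h₁ : Tendsto (fun n : ℕ => F n / F (n + k)) atTop (nhds 1) := by
    have := (shiftRatio F hF1 hrat k).inv₀ one_ne_zero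
    simp only [inv_one] at this
    convert this using 2 with n
    rw [inv_div]
  have h₂ : Tendsto (fun n : ℕ => F (n - k + k) / F (n - k)) atTop (nhds 1) :=
    (shiftRatio F hF1 hrat k).comp (tendsto_sub_atTop_nat k)
  have hratio : ∀ x : X, ν (g • x) / ν x = F (nf x) / F (nf (g • x)) := by
    intro x
    rw [hν, hν]
    rw [div_div_div_comm, div_one, one_div_div]
  apply tendsto_of_tendsto_of_tendsto_of_le_of_le
    (h₁.comp hnf_tendsto) (h₂.comp hnf_tendsto)
  · intro x
    show F (nf x) / F (nf x + k) ≤ ν (g • x) / ν x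
    rw [hratio x]
    gcongr
    exacts [(hFpos _).le, hFpos _, hmono (hle1 x)]
  · intro x
    show ν (g • x) / ν x ≤ F (nf x - k + k) / F (nf x - k)
    rw [hratio x]
    gcongr
    exacts [(hFpos _).le, hFpos _, hmono le_tsub_add,
      hmono (Nat.sub_le_iff_le_add.mpr (hle2 x))]
end

section
/- For a countable group G, the following are equivalent: (1) every finitely generated subgroup of G has subexponential growth; (2) there exists a moderate ℓ¹-function on G (with the left translation action); (3) every countable G-set admits a moderate ℓ¹-function. -/
open Filter

/-- The word ball of radius `n` in `G` with respect to `S`. -/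
def wordBall {G : Type*} [Group G] (S : Finset G) (n : ℕ) : Set G :=
  {g | ∃ l : List G, l.length ≤ n ∧ (∀ s ∈ l, s ∈ S) ∧ l.prod = g}

/-- `ν` is a moderate `ℓ¹`-function on the `G`-set `X`. -/
def IsModerateL1 (G : Type) [Group G] (X : Type) [MulAction G X] (ν : X → ℝ) : Prop :=
  Summable ν ∧ (∀ x, 0 < ν x) ∧
    ∀ g : G, Tendsto (fun x : X => ν (g • x) / ν x) cofinite (nhds 1)

/-!
If `ν` is moderate, then off a finite set every generator `s ∈ S` shrinks `ν` by at most a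
factor `ρ < 1`, so `ν ≥ c ρⁿ` on the word ball `Bₙ`; summability of `ν` then gives
`|Bₙ| ≤ C ρ⁻ⁿ` for every `ρ < 1`.

Conversely, exhaust `G` by finite symmetric sets `Sᵢ` and a countable `G`-set `X` by the finite
sets `B_{Sᵢ}(m) • {x₀, …, x_{m-1}}`. The index `ℓᵢ x` at which `x` first appears changes by at
most one under a letter of `Sᵢ`, and `rᵢ ^ ℓᵢ` is summable for `rᵢ < 1` by subexponential growth.
Take `ν = ∑ᵢ 2⁻ⁱ rᵢ ^ ℓᵢ / ‖rᵢ ^ ℓᵢ‖₁` with `rᵢ ↑ 1`. For `g ∈ S_K`, the tail `i ≥ K` of `ν` moves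
by at most a factor `r_K` under `g`, while each earlier term is `o` of the `K`-th one at infinity,
because `ℓ_K ≤ ℓᵢ`, `rᵢ < r_K` and `ℓ_K → ∞`.
-/

open Set Topology Pointwise

section WordBall

variable {G : Type*} [Group G] (S : Finset G)

theorem one_mem_wordBall (n : ℕ) : (1 : G) ∈ wordBall S n :=
  ⟨[], by simp⟩

theorem wordBall_mono : Monotone (wordBall S) :=
  fun _ _ hmn _ ⟨l, hl, hlS, hg⟩ => ⟨l, hl.trans hmn, hlS, hg⟩

theorem wordBall_subset_wordBall {S T : Finset G} (hST : S ⊆ T) (n : ℕ) :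
    wordBall S n ⊆ wordBall T n :=
  fun _ ⟨l, hl, hlS, hg⟩ => ⟨l, hl, fun s hs => hST (hlS s hs), hg⟩

theorem wordBall_zero : wordBall S 0 = {1} := by
  ext g
  simp [wordBall, eq_comm]

theorem wordBall_succ (n : ℕ) : wordBall S (n + 1) = insert 1 ((S : Set G) * wordBall S n) := by
  ext g
  simp only [mem_insert_iff, Set.mem_mul, Finset.mem_coe]
  constructor
  · rintro ⟨_ | ⟨s, l⟩, hl, hlS, rfl⟩
    · exact Or.inl rfl
    · exact Or.inr ⟨s, hlS s (by simp), l.prod,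
        ⟨l, by simpa using hl, fun t ht => hlS t (by simp [ht]), rfl⟩, rfl⟩
  · rintro (rfl | ⟨s, hs, h, ⟨l, hl, hlS, rfl⟩, rfl⟩)
    · exact one_mem_wordBall S _
    · exact ⟨s :: l, by simpa using hl, by simpa [hs] using hlS, by simp⟩

theorem wordBall_finite (n : ℕ) : (wordBall S n).Finite := by
  induction n with
  | zero => simp [wordBall_zero]
  | succ n ih => simpa [wordBall_succ] using S.finite_toSet.mul ih

theorem one_le_ncard_wordBall (n : ℕ) : 1 ≤ (wordBall S n).ncard :=
  (ncard_pos (wordBall_finite S n)).2 ⟨1, one_mem_wordBall S n⟩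

end WordBall

section Subexponential

variable {a : ℕ → ℝ}

theorem eventually_le_pow_of_tendsto_rpow_one_div (ha0 : ∀ n, 0 ≤ a n)
    (ha : Tendsto (fun n : ℕ => a n ^ (1 / (n : ℝ))) atTop (𝓝 1)) {c : ℝ} (hc : 1 < c) :
    ∀ᶠ n in atTop, a n ≤ c ^ n := by
  filter_upwards [ha.eventually (gt_mem_nhds hc), eventually_ne_atTop 0] with n hn hn0
  calc a n = (a n ^ (1 / (n : ℝ))) ^ n := by rw [one_div, Real.rpow_inv_natCast_pow (ha0 n) hn0]
    _ ≤ c ^ n := pow_le_pow_left₀ (Real.rpow_nonneg (ha0 n) _) hn.le n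

theorem summable_natCast_mul_mul_pow_of_tendsto_rpow_one_div (ha0 : ∀ n, 0 ≤ a n)
    (ha : Tendsto (fun n : ℕ => a n ^ (1 / (n : ℝ))) atTop (𝓝 1)) {r : ℝ} (hr0 : 0 ≤ r)
    (hr1 : r < 1) : Summable fun n : ℕ => n * a n * r ^ n := by
  -- any `1 < c < 1 / r` would do
  set c := 2 / (1 + r)
  have hc : 1 < c := by rw [lt_div_iff₀ (by linarith)]; linarith
  have hcr : c * r < 1 := by rw [div_mul_eq_mul_div, div_lt_one (by linarith)]; linarith
  refine Summable.of_norm_bounded_eventually_nat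
    (summable_pow_mul_geometric_of_norm_lt_one 1 (r := c * r) ?_) ?_
  · rwa [Real.norm_of_nonneg (by positivity)]
  · filter_upwards [eventually_le_pow_of_tendsto_rpow_one_div ha0 ha hc] with n hn
    rw [Real.norm_of_nonneg (by have := ha0 n; positivity), pow_one, mul_pow, ← mul_assoc]
    gcongr

theorem tendsto_rpow_one_div_of_le_mul_pow (ha1 : ∀ n, 1 ≤ a n)
    (ha : ∀ c > 1, ∃ C, ∀ n, a n ≤ C * c ^ n) :
    Tendsto (fun n : ℕ => a n ^ (1 / (n : ℝ))) atTop (𝓝 1) := by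
  refine tendsto_order.2 ⟨fun b hb => Eventually.of_forall fun n =>
    hb.trans_le (Real.one_le_rpow (ha1 n) (by positivity)), fun b hb => ?_⟩
  obtain ⟨c, hc1, hcb⟩ := exists_between hb
  obtain ⟨C, hC⟩ := ha c hc1
  have hC0 : 0 < C := by simpa using (ha1 0).trans (hC 0) |>.trans_lt' one_pos
  have hlim : Tendsto (fun n : ℕ => C ^ (1 / (n : ℝ)) * c) atTop (𝓝 c) := by
    simpa using (tendsto_const_nhds.rpow tendsto_one_div_atTop_nhds_zero_nat
      (Or.inl hC0.ne')).mul_const c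
  filter_upwards [hlim.eventually (gt_mem_nhds hcb), eventually_ne_atTop 0] with n hn hn0
  calc a n ^ (1 / (n : ℝ)) ≤ (C * c ^ n) ^ (1 / (n : ℝ)) :=
        Real.rpow_le_rpow (zero_le_one.trans (ha1 n)) (hC n) (by positivity)
    _ = C ^ (1 / (n : ℝ)) * c := by
        rw [Real.mul_rpow hC0.le (by positivity), one_div,
          Real.pow_rpow_inv_natCast (by positivity) hn0]
    _ < b := hn

end Subexponential

section GrowthOfModerate

variable {G : Type} [Group G] {ν : G → ℝ}

theorem exists_mul_pow_le_of_tendsto_smul_div (hpos : ∀ x, 0 < ν x)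
    (hmod : ∀ g : G, Tendsto (fun x => ν (g • x) / ν x) cofinite (𝓝 1)) (S : Finset G) {ρ : ℝ}
    (hρ0 : 0 ≤ ρ) (hρ1 : ρ < 1) : ∃ c > 0, ∀ n, ∀ g ∈ wordBall S n, c * ρ ^ n ≤ ν g := by
  set F : Set G := ⋃ s ∈ S, {x | ν (s * x) < ρ * ν x}
  have hF : F.Finite := S.finite_toSet.biUnion fun s _ =>
    (eventually_cofinite.1 ((hmod s).eventually (lt_mem_nhds hρ1))).subset fun x hx hlt =>
      (lt_div_iff₀ (hpos x)).1 hlt |>.not_gt hx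
  -- a letter applied outside `F` costs at most a factor `ρ`; one applied inside `F` lands in `E`
  set E : Set G := insert 1 ((S : Set G) * F)
  obtain ⟨a, -, ha⟩ :=
    E.exists_min_image ν ((S.finite_toSet.mul hF).insert 1) (insert_nonempty _ _)
  refine ⟨ν a, hpos a, fun n => ?_⟩
  have hpow : ∀ n, ν a * ρ ^ n ≤ ν a := fun n =>
    mul_le_of_le_one_right (hpos a).le (pow_le_one₀ hρ0 hρ1.le)
  induction n with
  | zero => simpa [wordBall_zero] using ha 1 (mem_insert _ _)
  | succ n ih =>
    rw [wordBall_succ]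
    rintro g (rfl | ⟨s, hs, h, hh, rfl⟩)
    · exact (hpow _).trans (ha 1 (mem_insert _ _))
    · by_cases hhF : h ∈ F
      · exact (hpow _).trans (ha _ (mem_insert_of_mem _ (Set.mul_mem_mul hs hhF)))
      · have hstep : ρ * ν h ≤ ν (s * h) := not_lt.1 fun hlt => hhF (mem_biUnion hs hlt)
        calc ν a * ρ ^ (n + 1) = ρ * (ν a * ρ ^ n) := by ring
          _ ≤ ρ * ν h := mul_le_mul_of_nonneg_left (ih h hh) hρ0
          _ ≤ ν (s * h) := hstep

theorem IsModerateL1.tendsto_card_wordBall_rpow (hν : IsModerateL1 G G ν) (S : Finset G) :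
    Tendsto (fun n : ℕ => (Nat.card (wordBall S n) : ℝ) ^ (1 / (n : ℝ))) atTop (𝓝 1) := by
  simp only [Nat.card_coe_set_eq]
  refine tendsto_rpow_one_div_of_le_mul_pow (fun n => mod_cast one_le_ncard_wordBall S n)
    fun c hc => ?_
  obtain ⟨k, hk0, hk⟩ := exists_mul_pow_le_of_tendsto_smul_div hν.2.1 hν.2.2 S
    (inv_nonneg.2 (by positivity)) (inv_lt_one_of_one_lt₀ hc)
  refine ⟨(∑' g, ν g) / k, fun n => ?_⟩
  have hfin := wordBall_finite S n
  have hcount : (wordBall S n).ncard * (k * c⁻¹ ^ n) ≤ ∑' g, ν g :=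
    calc (wordBall S n).ncard * (k * c⁻¹ ^ n) = ∑ _ ∈ hfin.toFinset, k * c⁻¹ ^ n := by
          rw [Finset.sum_const, nsmul_eq_mul, ncard_eq_toFinset_card _ hfin]
      _ ≤ ∑ g ∈ hfin.toFinset, ν g :=
          Finset.sum_le_sum fun g hg => hk n g (hfin.mem_toFinset.1 hg)
      _ ≤ ∑' g, ν g := hν.1.sum_le_tsum _ fun g _ => (hν.2.1 g).le
  have hcn : 0 < c ^ n := by positivity
  rw [div_mul_eq_mul_div, le_div_iff₀ hk0]
  calc (wordBall S n).ncard * k = (wordBall S n).ncard * (k * c⁻¹ ^ n) * c ^ n := by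
        rw [inv_pow]; field_simp
    _ ≤ (∑' g, ν g) * c ^ n := by gcongr

end GrowthOfModerate

section Level

variable {X : Type*} (A : ℕ → Set X)

noncomputable def level (x : X) : ℕ := sInf {m | x ∈ A m}

variable {A}

theorem mem_level (hA : ∀ x, ∃ m, x ∈ A m) (x : X) : x ∈ A (level A x) :=
  Nat.sInf_mem (hA x)

theorem level_le {x : X} {m : ℕ} (hx : x ∈ A m) : level A x ≤ m :=
  Nat.sInf_le hx

theorem tendsto_level_cofinite (hmono : Monotone A) (hA : ∀ x, ∃ m, x ∈ A m)
    (hfin : ∀ m, (A m).Finite) : Tendsto (level A) cofinite atTop :=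
  tendsto_atTop.2 fun m => eventually_cofinite.2 <|
    (hfin m).subset fun x hx => hmono (not_le.1 hx).le (mem_level hA x)

theorem summable_pow_level (hA : ∀ x, ∃ m, x ∈ A m) (hfin : ∀ m, (A m).Finite) {r : ℝ}
    (hr : 0 ≤ r) (h : Summable fun m => ((A m).ncard : ℝ) * r ^ m) :
    Summable fun x => r ^ level A x := by
  have hfiber : ∀ m, {x | level A x = m} ⊆ A m := fun m x hx => hx ▸ mem_level hA x
  rw [← (Equiv.sigmaFiberEquiv (level A)).summable_iff]
  refine (summable_sigma_of_nonneg fun _ => pow_nonneg hr _).2 ⟨fun m => ?_, ?_⟩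
  · have : Finite {x // level A x = m} := ((hfin m).subset (hfiber m)).to_subtype
    exact Summable.of_finite
  refine h.of_nonneg_of_le (fun _ => tsum_nonneg fun _ => pow_nonneg hr _) fun m => ?_
  calc ∑' y : {x // level A x = m}, r ^ level A y = ∑' _ : {x // level A x = m}, r ^ m :=
        tsum_congr fun y => by rw [y.2]
    _ = Nat.card {x // level A x = m} * r ^ m := by rw [tsum_const, nsmul_eq_mul]
    _ ≤ (A m).ncard * r ^ m := by
        gcongr
        exact Nat.card_mono (hfin m) (hfiber m)

end Level

section OrbitBall

variable {G X : Type*} [Group G] [MulAction G X] (S : Finset G) (f : X → ℕ)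

def orbitBall (m : ℕ) : Set X := wordBall S m • (f ⁻¹' Iio m)

noncomputable def orbitLevel : X → ℕ := level (orbitBall S f)

theorem orbitBall_mono : Monotone (orbitBall S f) := fun _ _ hmn =>
  smul_subset_smul (wordBall_mono S hmn) (preimage_mono (Iio_subset_Iio hmn))

theorem exists_mem_orbitBall (x : X) : ∃ m, x ∈ orbitBall S f m :=
  ⟨f x + 1, 1, one_mem_wordBall S _, x, Nat.lt_succ_self (f x), one_smul G x⟩

theorem orbitBall_finite {f : X → ℕ} (hf : Function.Injective f) (m : ℕ) :
    (orbitBall S f m).Finite :=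
  (wordBall_finite S m).smul ((finite_Iio m).preimage hf.injOn)

theorem ncard_orbitBall_le {f : X → ℕ} (hf : Function.Injective f) (m : ℕ) :
    (orbitBall S f m).ncard ≤ m * (wordBall S m).ncard := by
  have hfin : (f ⁻¹' Iio m).Finite := (finite_Iio m).preimage hf.injOn
  calc (orbitBall S f m).ncard ≤ (wordBall S m ×ˢ (f ⁻¹' Iio m)).ncard := by
        rw [orbitBall, ← image2_smul, ← image_prod]
        exact ncard_image_le ((wordBall_finite S m).prod hfin)
    _ ≤ m * (wordBall S m).ncard := by
        rw [ncard_prod, mul_comm]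
        gcongr
        exact (ncard_le_ncard_of_injOn f (fun x hx => hx) hf.injOn (finite_Iio m)).trans
          (ncard_Iio_nat m).le

theorem smul_mem_orbitBall {s : G} (hs : s ∈ S) {x : X} {m : ℕ} (hx : x ∈ orbitBall S f m) :
    s • x ∈ orbitBall S f (m + 1) := by
  obtain ⟨h, hh, y, hy, rfl⟩ := hx
  refine ⟨s * h, ?_, y, Iio_subset_Iio (Nat.le_succ m) hy, mul_smul s h y⟩
  rw [wordBall_succ]
  exact mem_insert_of_mem _ (Set.mul_mem_mul hs hh)

theorem orbitLevel_smul_le {s : G} (hs : s ∈ S) (x : X) :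
    orbitLevel S f (s • x) ≤ orbitLevel S f x + 1 :=
  level_le (smul_mem_orbitBall S f hs (mem_level (exists_mem_orbitBall S f) x))

theorem orbitLevel_le_of_subset {S T : Finset G} (hST : S ⊆ T) (x : X) :
    orbitLevel T f x ≤ orbitLevel S f x :=
  level_le (smul_subset_smul (wordBall_subset_wordBall hST _) subset_rfl
    (mem_level (exists_mem_orbitBall S f) x))

theorem tendsto_orbitLevel_cofinite {f : X → ℕ} (hf : Function.Injective f) :
    Tendsto (orbitLevel S f) cofinite atTop :=
  tendsto_level_cofinite (orbitBall_mono S f) (exists_mem_orbitBall S f) (orbitBall_finite S hf)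

theorem summable_pow_orbitLevel {f : X → ℕ} (hf : Function.Injective f)
    (hS : Tendsto (fun n : ℕ => (Nat.card (wordBall S n) : ℝ) ^ (1 / (n : ℝ))) atTop (𝓝 1))
    {r : ℝ} (hr0 : 0 ≤ r) (hr1 : r < 1) : Summable fun x => r ^ orbitLevel S f x := by
  simp only [Nat.card_coe_set_eq] at hS
  refine summable_pow_level (exists_mem_orbitBall S f) (orbitBall_finite S hf) hr0 <|
    (summable_natCast_mul_mul_pow_of_tendsto_rpow_one_div (fun _ => by positivity) hS hr0
      hr1).of_nonneg_of_le (fun _ => by positivity) fun m => ?_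
  gcongr
  exact_mod_cast ncard_orbitBall_le S hf m

end OrbitBall

theorem tendsto_div_nhds_one_of_eventually_mul_le {α : Type*} {l : Filter α} {φ ψ : α → ℝ}
    (hψ : ∀ x, 0 < ψ x) {c : ℕ → ℝ} (hc : Tendsto c atTop (𝓝 1))
    (h : ∀ᶠ K in atTop, ∀ᶠ x in l, c K * ψ x ≤ φ x ∧ c K * φ x ≤ ψ x) :
    Tendsto (fun x => φ x / ψ x) l (𝓝 1) := by
  refine tendsto_order.2 ⟨fun a ha => ?_, fun b hb => ?_⟩
  · obtain ⟨K, hK, haK⟩ := (h.and (hc.eventually (lt_mem_nhds ha))).exists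
    filter_upwards [hK] with x hx
    exact haK.trans_le ((le_div_iff₀ (hψ x)).2 hx.1)
  · obtain ⟨K, hK, hbK⟩ :=
      (h.and (hc.eventually (lt_mem_nhds (inv_lt_one_of_one_lt₀ hb)))).exists
    have hcK : 0 < c K := (inv_pos.2 (zero_lt_one.trans hb)).trans hbK
    filter_upwards [hK] with x hx
    calc φ x / ψ x ≤ (c K)⁻¹ := by
          rw [div_le_iff₀ (hψ x), inv_mul_eq_div, le_div_iff₀ hcK, mul_comm]
          exact hx.2
      _ < b := (inv_lt_comm₀ hcK (zero_lt_one.trans hb)).2 hbK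

section LayerSum

variable {X : Type*} {u : ℕ → X → ℝ}

theorem eventually_mul_tsum_le_tsum_nat_add (hu : ∀ i x, 0 ≤ u i x)
    (hsum : ∀ x, Summable fun i => u i x) {K : ℕ} (hlo : ∀ i < K, u i =o[cofinite] u K)
    {c : ℝ} (hc0 : 0 < c) (hc1 : c < 1) :
    ∀ᶠ x in cofinite, c * ∑' i, u i x ≤ ∑' i, u (i + K) x := by
  have hhead : (fun x => ∑ i ∈ Finset.range K, u i x) =o[cofinite] u K := by
    simpa [Finset.sum_fn] using
      Asymptotics.IsLittleO.sum fun i hi => hlo i (Finset.mem_range.1 hi)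
  -- a head of size at most `(c⁻¹ - 1) * u K x ≤ (c⁻¹ - 1) * tail` is exactly what is allowed
  have hδ : 0 < c⁻¹ - 1 := sub_pos.2 (one_lt_inv₀ hc0 |>.2 hc1)
  filter_upwards [hhead.bound hδ] with x hx
  have hH : 0 ≤ ∑ i ∈ Finset.range K, u i x := Finset.sum_nonneg fun i _ => hu i x
  rw [Real.norm_of_nonneg hH, Real.norm_of_nonneg (hu K x)] at hx
  have hKT : u K x ≤ ∑' i, u (i + K) x := by
    simpa using ((summable_nat_add_iff K).2 (hsum x)).le_tsum 0 fun j _ => hu _ x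
  rw [← (hsum x).sum_add_tsum_nat_add K]
  have hcδ : c * (c⁻¹ - 1) = 1 - c := by field_simp
  nlinarith [mul_le_mul_of_nonneg_left hKT hδ.le]

theorem eventually_sq_mul_tsum_le (hu : ∀ i x, 0 ≤ u i x) (hsum : ∀ x, Summable fun i => u i x)
    {σ : X → X} (hσ : Function.Injective σ) {K : ℕ} (hlo : ∀ i < K, u i =o[cofinite] u K)
    {c : ℝ} (hc0 : 0 < c) (hc1 : c < 1)
    (htail : ∀ i ≥ K, ∀ x, c * u i x ≤ u i (σ x) ∧ c * u i (σ x) ≤ u i x) :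
    ∀ᶠ x in cofinite,
      c ^ 2 * ∑' i, u i x ≤ ∑' i, u i (σ x) ∧ c ^ 2 * ∑' i, u i (σ x) ≤ ∑' i, u i x := by
  set T := fun x => ∑' i, u (i + K) x
  have hTsum : ∀ x, Summable fun i => u (i + K) x :=
    fun x => (summable_nat_add_iff K).2 (hsum x)
  have hT_le : ∀ x, T x ≤ ∑' i, u i x := fun x => by
    rw [← (hsum x).sum_add_tsum_nat_add K]
    exact le_add_of_nonneg_left (Finset.sum_nonneg fun i _ => hu i x)
  have hTσ : ∀ x, c * T x ≤ T (σ x) ∧ c * T (σ x) ≤ T x := fun x => by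
    simp only [T, ← tsum_mul_left]
    exact ⟨((hTsum x).mul_left c).tsum_le_tsum (fun i => (htail _ (by omega) x).1) (hTsum _),
      ((hTsum _).mul_left c).tsum_le_tsum (fun i => (htail _ (by omega) x).2) (hTsum x)⟩
  have hhead := eventually_mul_tsum_le_tsum_nat_add hu hsum hlo hc0 hc1
  filter_upwards [hhead, hσ.tendsto_cofinite.eventually hhead] with x hx hσx
  constructor
  · calc c ^ 2 * ∑' i, u i x = c * (c * ∑' i, u i x) := by ring
      _ ≤ c * T x := mul_le_mul_of_nonneg_left hx hc0.le
      _ ≤ T (σ x) := (hTσ x).1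
      _ ≤ ∑' i, u i (σ x) := hT_le _
  · calc c ^ 2 * ∑' i, u i (σ x) = c * (c * ∑' i, u i (σ x)) := by ring
      _ ≤ c * T (σ x) := mul_le_mul_of_nonneg_left hσx hc0.le
      _ ≤ T x := (hTσ x).2
      _ ≤ ∑' i, u i x := hT_le x

end LayerSum

section Construction

variable {G X : Type} [Group G] [MulAction G X] (S : ℕ → Finset G) (f : X → ℕ) (r : ℕ → ℝ)

-- normalising by `1 + ‖·‖₁` instead of `‖·‖₁` avoids a division by zero when `X` is empty
noncomputable def layer (i : ℕ) (x : X) : ℝ :=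
  2⁻¹ ^ i / (1 + ∑' y, r i ^ orbitLevel (S i) f y) * r i ^ orbitLevel (S i) f x

noncomputable def layerSum (x : X) : ℝ := ∑' i, layer S f r i x

variable {S f r}

theorem layer_pos (hr : ∀ i, r i ∈ Ioo 0 1) (i : ℕ) (x : X) : 0 < layer S f r i x := by
  have := (hr i).1
  unfold layer
  positivity

theorem layer_le (hr : ∀ i, r i ∈ Ioo 0 1) (i : ℕ) (x : X) : layer S f r i x ≤ 2⁻¹ ^ i := by
  have hZ : 1 ≤ 1 + ∑' y, r i ^ orbitLevel (S i) f y :=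
    le_add_of_nonneg_right (tsum_nonneg fun _ => pow_nonneg (hr i).1.le _)
  exact (mul_le_of_le_one_right (by positivity) (pow_le_one₀ (hr i).1.le (hr i).2.le)).trans
    (div_le_self (by positivity) hZ)

theorem summable_layer {i : ℕ} (hsum : Summable fun x => r i ^ orbitLevel (S i) f x) :
    Summable (layer S f r i) :=
  hsum.mul_left _

theorem tsum_layer_le (hr : ∀ i, r i ∈ Ioo 0 1) (i : ℕ) : ∑' x, layer S f r i x ≤ 2⁻¹ ^ i := by
  set Z := ∑' y, r i ^ orbitLevel (S i) f y
  have hZ : 0 ≤ Z := tsum_nonneg fun _ => pow_nonneg (hr i).1.le _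
  simp only [layer]
  rw [tsum_mul_left, div_mul_eq_mul_div, div_le_iff₀ (by positivity)]
  nlinarith [pow_pos (inv_pos.2 (two_pos (α := ℝ))) i]

theorem summable_layerSum (hr : ∀ i, r i ∈ Ioo 0 1)
    (hsum : ∀ i, Summable fun x => r i ^ orbitLevel (S i) f x) :
    Summable (layerSum S f r) := by
  have hprod : Summable fun p : ℕ × X => layer S f r p.1 p.2 :=
    (summable_prod_of_nonneg fun p => (layer_pos hr p.1 p.2).le).2
      ⟨fun i => summable_layer (hsum i),
        (summable_geometric_of_lt_one (by norm_num) (by norm_num)).of_nonneg_of_le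
          (fun i => tsum_nonneg fun x => (layer_pos hr i x).le) (tsum_layer_le hr)⟩
  exact hprod.prod_symm.prod

theorem layer_smul_ge (hr : ∀ i, r i ∈ Ioo 0 1) {i : ℕ} {s : G} (hs : s ∈ S i) (x : X) :
    r i * layer S f r i x ≤ layer S f r i (s • x) := by
  unfold layer
  rw [mul_left_comm, ← pow_succ']
  have := (hr i).1
  exact mul_le_mul_of_nonneg_left (pow_le_pow_of_le_one this.le (hr i).2.le
    (orbitLevel_smul_le (S i) f hs x)) (by positivity)

theorem layer_isLittleO (hmono : Monotone S) (hf : Function.Injective f) (hr : ∀ i, r i ∈ Ioo 0 1)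
    (hr_mono : StrictMono r) {i K : ℕ} (hiK : i < K) :
    layer S f r i =o[cofinite] layer S f r K := by
  set w : ℕ → ℝ := fun j => 2⁻¹ ^ j / (1 + ∑' y, r j ^ orbitLevel (S j) f y)
  have hw : ∀ j, 0 < w j := fun j => by
    have := (hr j).1
    positivity
  have hri := (hr i).1
  have hrK := (hr K).1
  have hq : Tendsto (fun x => w i / w K * (r i / r K) ^ orbitLevel (S K) f x) cofinite (𝓝 0) := by
    simpa using (((tendsto_pow_atTop_nhds_zero_of_lt_one (by positivity)
      ((div_lt_one hrK).2 (hr_mono hiK))).comp (tendsto_orbitLevel_cofinite (S K) hf)).const_mul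
      (w i / w K))
  refine (Asymptotics.isBigO_of_le _ fun x => ?_).trans_isLittleO
    (Asymptotics.isLittleO_iff_exists_eq_mul.2 ⟨_, hq, EventuallyEq.rfl⟩)
  rw [Pi.mul_apply, Real.norm_of_nonneg (layer_pos hr i x).le,
    Real.norm_of_nonneg (mul_pos (by positivity) (layer_pos hr K x)).le]
  calc layer S f r i x = w i * r i ^ orbitLevel (S i) f x := rfl
    _ ≤ w i * r i ^ orbitLevel (S K) f x :=
        mul_le_mul_of_nonneg_left (pow_le_pow_of_le_one hri.le (hr i).2.le
          (orbitLevel_le_of_subset f (hmono hiK.le) x)) (hw i).le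
    _ = w i / w K * (r i / r K) ^ orbitLevel (S K) f x * layer S f r K x := by
        change _ = _ * (w K * _)
        rw [div_pow]
        field_simp [(hw K).ne']

theorem isModerateL1_layerSum (hmono : Monotone S) (hsymm : ∀ i, ∀ s ∈ S i, s⁻¹ ∈ S i)
    (hcover : ∀ g, ∃ i, g ∈ S i) (hf : Function.Injective f) (hr : ∀ i, r i ∈ Ioo 0 1)
    (hr_mono : StrictMono r) (hr_lim : Tendsto r atTop (𝓝 1))
    (hsum : ∀ i, Summable fun x => r i ^ orbitLevel (S i) f x) :
    IsModerateL1 G X (layerSum S f r) := by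
  have hsum_i : ∀ x, Summable fun i => layer S f r i x := fun x =>
    (summable_geometric_of_lt_one (by norm_num) (by norm_num)).of_nonneg_of_le
      (fun i => (layer_pos hr i x).le) fun i => layer_le hr i x
  have hpos : ∀ x, 0 < layerSum S f r x := fun x =>
    (hsum_i x).tsum_pos (fun i => (layer_pos hr i x).le) 0 (layer_pos hr 0 x)
  refine ⟨summable_layerSum hr hsum, hpos, fun g => ?_⟩
  obtain ⟨j, hj⟩ := hcover g
  refine tendsto_div_nhds_one_of_eventually_mul_le hpos (by simpa using hr_lim.pow 2) ?_
  filter_upwards [eventually_ge_atTop j] with K hjK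
  refine eventually_sq_mul_tsum_le (fun i x => (layer_pos hr i x).le) hsum_i
    (MulAction.injective g) (K := K) (fun i hi => layer_isLittleO hmono hf hr hr_mono hi)
    (hr K).1 (hr K).2 fun i hiK x => ?_
  have hg : g ∈ S i := hmono (hjK.trans hiK) hj
  have hrKi : ∀ y, r K * layer S f r i y ≤ r i * layer S f r i y := fun y =>
    mul_le_mul_of_nonneg_right (hr_mono.monotone hiK) (layer_pos hr i y).le
  refine ⟨(hrKi x).trans (layer_smul_ge hr hg x), (hrKi _).trans ?_⟩
  simpa using layer_smul_ge hr (hsymm i g hg) (g • x)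

end Construction

theorem exists_symmetric_exhaustion (G : Type*) [Group G] [Countable G] :
    ∃ S : ℕ → Finset G, Monotone S ∧ (∀ i, ∀ s ∈ S i, s⁻¹ ∈ S i) ∧ ∀ g, ∃ i, g ∈ S i := by
  classical
  obtain ⟨e, he⟩ := exists_surjective_nat G
  refine ⟨fun i => (Finset.range i).image e ∪ ((Finset.range i).image e)⁻¹,
    fun i j hij => ?_, fun i s hs => ?_, fun g => ?_⟩
  · have h := Finset.image_subset_image (f := e) (Finset.range_subset_range.2 hij)
    exact Finset.union_subset_union h (Finset.inv_subset_inv h)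
  · simpa [Finset.mem_inv', or_comm] using hs
  · obtain ⟨n, rfl⟩ := he g
    exact ⟨n + 1, Finset.mem_union_left _
      (Finset.mem_image_of_mem e (Finset.self_mem_range_succ n))⟩

theorem exists_isModerateL1_of_tendsto_card_wordBall_rpow {G : Type} [Group G] [Countable G]
    (hG : ∀ S : Finset G, (∀ s ∈ S, s⁻¹ ∈ S) →
      Tendsto (fun n : ℕ => (Nat.card (wordBall S n) : ℝ) ^ (1 / (n : ℝ))) atTop (𝓝 1))
    (X : Type) [MulAction G X] [Countable X] : ∃ ν : X → ℝ, IsModerateL1 G X ν := by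
  obtain ⟨S, hmono, hsymm, hcover⟩ := exists_symmetric_exhaustion G
  obtain ⟨f, hf⟩ := exists_injective_nat X
  obtain ⟨r, hr_mono, hr, hr_lim⟩ := exists_seq_strictMono_tendsto' (zero_lt_one' ℝ)
  exact ⟨layerSum S f r, isModerateL1_layerSum hmono hsymm hcover hf hr hr_mono hr_lim fun i =>
    summable_pow_orbitLevel (S i) hf (hG (S i) (hsymm i)) (hr i).1.le (hr i).2⟩

theorem moderate_l1_tfae (G : Type) [Group G] [Countable G] :
    ((∀ S : Finset G, (∀ s ∈ S, s⁻¹ ∈ S) →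
        Tendsto (fun n : ℕ => (Nat.card (wordBall S n) : ℝ) ^ (1 / (n : ℝ))) atTop (nhds 1)) ↔
      ∃ ν : G → ℝ, IsModerateL1 G G ν) ∧
    ((∃ ν : G → ℝ, IsModerateL1 G G ν) ↔
      ∀ (X : Type) [MulAction G X] [Countable X], ∃ ν : X → ℝ, IsModerateL1 G X ν) := by
  have growth_of_moderate : (∃ ν : G → ℝ, IsModerateL1 G G ν) → ∀ S : Finset G,
      (∀ s ∈ S, s⁻¹ ∈ S) →
        Tendsto (fun n : ℕ => (Nat.card (wordBall S n) : ℝ) ^ (1 / (n : ℝ))) atTop (nhds 1) :=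
    fun ⟨_, hν⟩ S _ => hν.tendsto_card_wordBall_rpow S
  exact ⟨⟨fun hG => exists_isModerateL1_of_tendsto_card_wordBall_rpow hG G, growth_of_moderate⟩,
    fun hν => exists_isModerateL1_of_tendsto_card_wordBall_rpow (growth_of_moderate hν),
    fun h => h G⟩
end
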